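/- arXiv:2402.18353 — 3 statements merged into one kernel-verified Lean document; each statement's English description precedes it below -/
import Mathlib

section
/- Let G be the graph obtained from K_{3,3} by subdividing one edge exactly once. Then G does not admit a (1^2,2^3)-packing edge-coloring, i.e., E(G) cannot be partitioned into 2 matchings and 3 induced matchings. -/
open SimpleGraph

/-- A matching in `G` given as a set of edges: edges of `G`, pairwise vertex-disjoint. -/
def IsMatchingSet {V : Type*} (G : SimpleGraph V) (M : Set (Sym2 V)) : Prop :=
  M ⊆ G.edgeSet ∧ ∀ e ∈ M, ∀ f ∈ M, e ≠ f → ∀ v, v ∈ e → v ∉ f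

/-- An induced matching: a matching such that no edge of `G` joins endpoints of two
distinct edges of the matching. -/
def IsInducedMatchingSet {V : Type*} (G : SimpleGraph V) (M : Set (Sym2 V)) : Prop :=
  IsMatchingSet G M ∧ ∀ e ∈ M, ∀ f ∈ M, e ≠ f → ∀ u v, u ∈ e → v ∈ f → ¬ G.Adj u v

/-- The graph obtained from `K_{3,3}` (parts `{0,1,2}` and `{3,4,5}`) by subdividing the
edge `03` once through the new vertex `6`. -/
def subK33 : SimpleGraph (Fin 7) :=
  SimpleGraph.fromRel (fun a b =>
    (a.val < 3 ∧ 3 ≤ b.val ∧ b.val < 6 ∧ ¬(a.val = 0 ∧ b.val = 3)) ∨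
    (a.val = 0 ∧ b.val = 6) ∨ (a.val = 3 ∧ b.val = 6))

/-- A `(1^ℓ,2^k)`-packing edge-coloring: a partition of the edge set of `G` into
`ℓ` matchings and `k` induced matchings. -/
def HasPackingColoring {V : Type*} (G : SimpleGraph V) (l k : ℕ) : Prop :=
  ∃ (M : Fin l → Set (Sym2 V)) (N : Fin k → Set (Sym2 V)),
    (∀ i, IsMatchingSet G (M i)) ∧ (∀ j, IsInducedMatchingSet G (N j)) ∧
    ((⋃ i, M i) ∪ ⋃ j, N j) = G.edgeSet ∧
    (∀ i i', i ≠ i' → Disjoint (M i) (M i')) ∧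
    (∀ j j', j ≠ j' → Disjoint (N j) (N j')) ∧
    (∀ i j, Disjoint (M i) (N j))

lemma packing_map {V W : Type*} (G : SimpleGraph V) (H : SimpleGraph W) (φ : G ≃g H)
    (l k : ℕ) (h : HasPackingColoring G l k) : HasPackingColoring H l k := by
  obtain ⟨M, N, hM, hN, huniv, hMM, hNN, hMN⟩ := h
  set m : Sym2 V → Sym2 W := Sym2.map φ with hm
  have hinj : Function.Injective m := Sym2.map.injective φ.injective
  have hmem : ∀ (e : Sym2 V) (v : W), v ∈ m e ↔ φ.symm v ∈ e := by
    intro e v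
    constructor
    · rintro hv
      rw [Sym2.mem_map] at hv
      obtain ⟨a, ha, rfl⟩ := hv
      simpa using ha
    · intro hv
      rw [Sym2.mem_map]
      exact ⟨φ.symm v, hv, by simp⟩
  have hedge : ∀ e : Sym2 V, m e ∈ H.edgeSet ↔ e ∈ G.edgeSet := by
    intro e; exact φ.toEmbedding.map_mem_edgeSet_iff
  have hmatch : ∀ (S : Set (Sym2 V)), IsMatchingSet G S → IsMatchingSet H (m '' S) := by
    rintro S ⟨hsub, hdisj⟩
    constructor
    · rintro _ ⟨e, he, rfl⟩; exact (hedge e).2 (hsub he)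
    · rintro _ ⟨e, he, rfl⟩ _ ⟨f, hf, rfl⟩ hne v hv
      rw [hmem] at hv ⊢
      exact hdisj e he f hf (fun hh => hne (by rw [hh])) _ hv
  refine ⟨fun i => m '' M i, fun j => m '' N j, fun i => hmatch _ (hM i), ?_, ?_, ?_, ?_, ?_⟩
  · rintro j
    refine ⟨hmatch _ (hN j).1, ?_⟩
    rintro _ ⟨e, he, rfl⟩ _ ⟨f, hf, rfl⟩ hne u v hu hv hadj
    rw [hmem] at hu hv
    exact (hN j).2 e he f hf (fun hh => hne (by rw [hh])) _ _ hu hv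
      (by simpa using φ.symm.map_adj_iff.2 hadj)
  · have : ((⋃ i, m '' M i) ∪ ⋃ j, m '' N j) = m '' G.edgeSet := by
      rw [← huniv]; simp [Set.image_union, Set.image_iUnion]
    rw [this]
    ext e'
    constructor
    · rintro ⟨e, he, rfl⟩; exact (hedge e).2 he
    · intro he'
      refine ⟨Sym2.map φ.symm e', ?_, ?_⟩
      · rw [← hedge]
        simpa [hm, Sym2.map_map, Function.comp] using he'
      · simp [hm, Sym2.map_map, Function.comp]
  · intro i i' hne
    exact (Set.disjoint_image_iff hinj).2 (hMM i i' hne)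
  · intro j j' hne
    exact (Set.disjoint_image_iff hinj).2 (hNN j j' hne)
  · intro i j
    exact (Set.disjoint_image_iff hinj).2 (hMN i j)

instance : DecidableRel subK33.Adj := fun a b => by
  unfold subK33; rw [SimpleGraph.fromRel_adj]; infer_instance

lemma matching_card_bound {V : Type*} [Fintype V] [DecidableEq V] (G : SimpleGraph V)
    (s : Finset (Sym2 V)) (hs : ∀ e ∈ s, e ∈ G.edgeSet)
    (hm : ∀ e ∈ s, ∀ f ∈ s, e ≠ f → ∀ v, v ∈ e → v ∉ f) :
    2 * s.card ≤ Fintype.card V := by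
  classical
  set B : Sym2 V → Finset V := fun e => Finset.univ.filter (· ∈ e) with hB
  have hcard : ∀ e ∈ s, (B e).card = 2 := by
    intro e he
    induction e using Sym2.ind with
    | _ a b =>
      have hadj : G.Adj a b := (G.mem_edgeSet).1 (hs _ he)
      have : B s(a,b) = {a, b} := by
        ext v; simp [hB, Sym2.mem_iff]
      rw [this, Finset.card_insert_of_notMem (by simp [hadj.ne]), Finset.card_singleton]
  have hdisj : ∀ e ∈ s, ∀ f ∈ s, e ≠ f → Disjoint (B e) (B f) := by
    intro e he f hf hef
    refine Finset.disjoint_left.2 ?_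
    intro v hv hv'
    exact hm e he f hf hef v (by simpa [hB] using hv) (by simpa [hB] using hv')
  calc 2 * s.card = ∑ e ∈ s, (B e).card := by
        rw [Finset.sum_congr rfl hcard, Finset.sum_const, smul_eq_mul, mul_comm]
    _ = (s.biUnion B).card := (Finset.card_biUnion hdisj).symm
    _ ≤ Fintype.card V := Finset.card_le_univ _

set_option maxRecDepth 10000 in
lemma subK33_card10 : subK33.edgeFinset.card = 10 := by decide

set_option maxRecDepth 10000 in
lemma subK33_no_induced_pair : ∀ e ∈ subK33.edgeFinset, ∀ f ∈ subK33.edgeFinset, e ≠ f →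
    (∃ v, v ∈ e ∧ v ∈ f) ∨ ∃ u, u ∈ e ∧ ∃ v, v ∈ f ∧ subK33.Adj u v := by decide

lemma subK33_no_packing : ¬ HasPackingColoring subK33 2 3 := by
  rintro ⟨M, N, hM, hN, huniv, -, -, -⟩
  classical
  let F : Fin 2 → Finset (Sym2 (Fin 7)) := fun i => (Set.toFinite (M i)).toFinset
  let T : Fin 3 → Finset (Sym2 (Fin 7)) := fun j => (Set.toFinite (N j)).toFinset
  have hFmem : ∀ i e, e ∈ F i ↔ e ∈ M i := by
    intro i e; simp [F, Set.Finite.mem_toFinset]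
  have hTmem : ∀ j e, e ∈ T j ↔ e ∈ N j := by
    intro j e; simp [T, Set.Finite.mem_toFinset]
  have hFcard : ∀ i, (F i).card ≤ 3 := by
    intro i
    have := matching_card_bound subK33 (F i)
      (fun e he => (hM i).1 ((hFmem i e).1 he))
      (fun e he f hf hne => (hM i).2 e ((hFmem i e).1 he) f ((hFmem i f).1 hf) hne)
    simp [Fintype.card_fin] at this
    omega
  have hTcard : ∀ j, (T j).card ≤ 1 := by
    intro j
    refine Finset.card_le_one.2 ?_
    intro e he f hf
    by_contra hne
    have heN := (hTmem j e).1 he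
    have hfN := (hTmem j f).1 hf
    have heE : e ∈ subK33.edgeFinset := by
      rw [SimpleGraph.mem_edgeFinset]; exact (hN j).1.1 heN
    have hfE : f ∈ subK33.edgeFinset := by
      rw [SimpleGraph.mem_edgeFinset]; exact (hN j).1.1 hfN
    rcases subK33_no_induced_pair e heE f hfE hne with ⟨v, hv1, hv2⟩ | ⟨u, hu, v, hv, hadj⟩
    · exact (hN j).1.2 e heN f hfN hne v hv1 hv2
    · exact (hN j).2 e heN f hfN hne u v hu hv hadj
  have hsub : subK33.edgeFinset ⊆ (F 0 ∪ F 1) ∪ (T 0 ∪ T 1 ∪ T 2) := by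
    intro e he
    rw [SimpleGraph.mem_edgeFinset] at he
    rw [← huniv] at he
    simp only [Finset.mem_union, hFmem, hTmem]
    rcases he with he | he
    · simp only [Set.mem_iUnion] at he
      obtain ⟨i, hi⟩ := he
      fin_cases i
      · exact Or.inl (Or.inl hi)
      · exact Or.inl (Or.inr hi)
    · simp only [Set.mem_iUnion] at he
      obtain ⟨j, hj⟩ := he
      fin_cases j
      · exact Or.inr (Or.inl (Or.inl hj))
      · exact Or.inr (Or.inl (Or.inr hj))
      · exact Or.inr (Or.inr hj)
  have h10 : (10 : ℕ) ≤ ((F 0 ∪ F 1) ∪ (T 0 ∪ T 1 ∪ T 2)).card := by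
    rw [← subK33_card10]; exact Finset.card_le_card hsub
  have hle : ((F 0 ∪ F 1) ∪ (T 0 ∪ T 1 ∪ T 2)).card ≤ 9 := by
    calc ((F 0 ∪ F 1) ∪ (T 0 ∪ T 1 ∪ T 2)).card
        ≤ (F 0 ∪ F 1).card + (T 0 ∪ T 1 ∪ T 2).card := Finset.card_union_le _ _
      _ ≤ ((F 0).card + (F 1).card) + ((T 0 ∪ T 1).card + (T 2).card) := by
          gcongr <;> exact Finset.card_union_le _ _
      _ ≤ ((F 0).card + (F 1).card) + (((T 0).card + (T 1).card) + (T 2).card) := by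
          gcongr; exact Finset.card_union_le _ _
      _ ≤ (3 + 3) + ((1 + 1) + 1) := by
          gcongr <;> first | exact hFcard _ | exact hTcard _
      _ = 9 := rfl
  omega

theorem stmt2 {W : Type*} (G : SimpleGraph W) (h : Nonempty (G ≃g subK33)) :
    ¬ HasPackingColoring G 2 3 := by
  intro hcol
  obtain ⟨φ⟩ := h
  exact subK33_no_packing (packing_map G subK33 φ 2 3 hcol)
end

section
/- Let G be a cubic graph and M1, M2 disjoint matchings with |M1 ∪ M2| maximum over all pairs of disjoint matchings of G. Then the graph G − M1 − M2 contains no cycle. -/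
open SimpleGraph

/-- `M1, M2` are disjoint matchings of `G` with `|M1 ∪ M2|` maximum over all pairs of
disjoint matchings of `G`. -/
def MaxDisjointPair {V : Type*} (G : SimpleGraph V) (M1 M2 : Set (Sym2 V)) : Prop :=
  IsMatchingSet G M1 ∧ IsMatchingSet G M2 ∧ Disjoint M1 M2 ∧
  ∀ N1 N2 : Set (Sym2 V), IsMatchingSet G N1 → IsMatchingSet G N2 → Disjoint N1 N2 →
    (N1 ∪ N2).ncard ≤ (M1 ∪ M2).ncard

/-- Adjacency in `Ĝ = G − M1 − M2`: adjacency via an edge of `G` not in `M1 ∪ M2`. -/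
def hatAdj {V : Type*} (G : SimpleGraph V) (M1 M2 : Set (Sym2 V)) (x y : V) : Prop :=
  G.Adj x y ∧ s(x, y) ∉ M1 ∪ M2

/-!
Write `B = M1 ∪ M2`; as a union of two matchings it forms a graph of maximum degree two. A vertex
on a cycle of `G − B` has two free edges, hence, `G` being cubic, at most one edge of `B`. Let
`v1 v2 v3` be consecutive on such a cycle and say `v2` is not covered by `M2`. Maximality forbids
adding `v2v1` or `v2v3` to `M2`, so `v1` and `v3` are covered by `M2`, hence not by `M1`. A Kempe
exchange of `M1` and `M2` on the `B`-component of `v2` then shows that `v2` is joined to `v1` and to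
`v3` by `B`-paths: otherwise after the exchange `v2v1` could be added to `M1`. So one component of
`B` contains the three vertices `v1, v2, v3` of degree at most one, which is impossible in a graph
of maximum degree two.
-/

namespace SimpleGraph

variable {V : Type*} {H : SimpleGraph V}

lemma Walk.IsPath.ncard_neighborSet_toSubgraph_of_ne {a b w : V} {p : H.Walk a b}
    (hp : p.IsPath) (hw : w ∈ p.support) (hwa : w ≠ a) (hwb : w ≠ b) :
    (p.toSubgraph.neighborSet w).ncard = 2 := by
  obtain ⟨i, rfl, hi⟩ := Walk.mem_support_iff_exists_getVert.mp hw
  refine hp.ncard_neighborSet_toSubgraph_internal_eq_two (fun h => hwa ?_) ?_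
  · rw [h, Walk.getVert_zero]
  · exact hi.lt_of_ne fun h => hwb (h ▸ p.getVert_length)

lemma Walk.IsPath.neighborSet_toSubgraph_eq {a b w : V} {p : H.Walk a b} (hp : p.IsPath)
    (hdeg : ∀ x, (H.neighborSet x).encard ≤ 2) (hab : a ≠ b)
    (ha : (H.neighborSet a).Subsingleton) (hb : (H.neighborSet b).Subsingleton)
    (hw : w ∈ p.support) : p.toSubgraph.neighborSet w = H.neighborSet w := by
  refine p.finite_neighborSet_toSubgraph.eq_of_subset_of_encard_le
    (fun _ hy => p.toSubgraph.adj_sub hy) ?_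
  have hnil : ¬ p.Nil := Walk.not_nil_of_ne hab
  by_cases hwa : w = a
  · subst hwa
    rw [hp.neighborSet_toSubgraph_startpoint hnil, Set.encard_singleton]
    exact Set.encard_le_one_iff_subsingleton.mpr ha
  by_cases hwb : w = b
  · subst hwb
    rw [hp.neighborSet_toSubgraph_endpoint hnil, Set.encard_singleton]
    exact Set.encard_le_one_iff_subsingleton.mpr hb
  rw [← p.finite_neighborSet_toSubgraph.cast_ncard_eq,
    hp.ncard_neighborSet_toSubgraph_of_ne hw hwa hwb]
  exact hdeg w

lemma Walk.IsPath.mem_support_of_reachable {a b c : V} {p : H.Walk a b} (hp : p.IsPath)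
    (hdeg : ∀ x, (H.neighborSet x).encard ≤ 2) (hab : a ≠ b)
    (ha : (H.neighborSet a).Subsingleton) (hb : (H.neighborSet b).Subsingleton)
    (hc : H.Reachable a c) : c ∈ p.support := by
  replace hc := (reachable_iff_reflTransGen a c).mp hc
  induction hc with
  | refl => exact p.start_mem_support
  | @tail x y _ hxy ih =>
    have hxy' : y ∈ p.toSubgraph.neighborSet x := by
      rwa [hp.neighborSet_toSubgraph_eq hdeg hab ha hb ih]
    exact p.mem_verts_toSubgraph.mp hxy'.snd_mem

/-- A connected graph of maximum degree two has at most two vertices of degree at most one. -/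
lemma Reachable.not_reachable_of_subsingleton_neighborSet {a b c : V}
    (hdeg : ∀ x, (H.neighborSet x).encard ≤ 2) (hab : a ≠ b) (hac : a ≠ c) (hbc : b ≠ c)
    (ha : (H.neighborSet a).Subsingleton) (hb : (H.neighborSet b).Subsingleton)
    (hc : (H.neighborSet c).Subsingleton) (h : H.Reachable a b) : ¬ H.Reachable a c := by
  classical
  intro hrc
  obtain ⟨p, hp⟩ := h.some.toPath
  have hcp := hp.mem_support_of_reachable hdeg hab ha hb hrc
  have h2 := hp.ncard_neighborSet_toSubgraph_of_ne hcp hac.symm hbc.symm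
  rw [hp.neighborSet_toSubgraph_eq hdeg hab ha hb hcp] at h2
  have := (Set.ncard_le_one hc.finite).mpr hc
  omega

lemma Walk.IsCycle.exists_adj_ne {u w : V} {c : H.Walk u u} (hc : c.IsCycle)
    (hw : w ∈ c.support) : ∃ y z, y ≠ z ∧ c.toSubgraph.Adj w y ∧ c.toSubgraph.Adj w z := by
  obtain ⟨y, z, hyz, h⟩ := Set.ncard_eq_two.mp (hc.ncard_neighborSet_toSubgraph_eq_two hw)
  have hy : y ∈ c.toSubgraph.neighborSet w := h ▸ Set.mem_insert y {z}
  have hz : z ∈ c.toSubgraph.neighborSet w := h ▸ Set.mem_insert_of_mem y rfl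
  exact ⟨y, z, hyz, hy, hz⟩

end SimpleGraph

section Matchings

variable {V : Type*} {G : SimpleGraph V} {M M1 M2 K : Set (Sym2 V)}

lemma IsMatchingSet.subsingleton_incident (hM : IsMatchingSet G M) (v : V) :
    {e ∈ M | v ∈ e}.Subsingleton := fun e ⟨he, hve⟩ f ⟨hf, hvf⟩ =>
  not_not.mp fun hef => hM.2 e he f hf hef v hve hvf

lemma subsingleton_neighborSet_fromEdgeSet {B : Set (Sym2 V)} {w : V}
    (h : {e ∈ B | w ∈ e}.Subsingleton) : ((fromEdgeSet B).neighborSet w).Subsingleton :=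
  fun _ hy _ hz => Sym2.congr_right.mp (h ⟨hy.1, Sym2.mem_mk_left _ _⟩ ⟨hz.1, Sym2.mem_mk_left _ _⟩)

lemma IsMatchingSet.encard_neighborSet_fromEdgeSet_union_le (h1 : IsMatchingSet G M1)
    (h2 : IsMatchingSet G M2) (w : V) : ((fromEdgeSet (M1 ∪ M2)).neighborSet w).encard ≤ 2 := by
  have hle : ∀ {M}, IsMatchingSet G M → ((fromEdgeSet M).neighborSet w).encard ≤ 1 := fun hM =>
    Set.encard_le_one_iff_subsingleton.mpr
      (subsingleton_neighborSet_fromEdgeSet (hM.subsingleton_incident w))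
  rw [fromEdgeSet_union, neighborSet_sup, ← one_add_one_eq_two]
  exact (Set.encard_union_le _ _).trans (add_le_add (hle h1) (hle h2))

lemma subsingleton_incident_of_deleteEdges_adj [Fintype V] [DecidableRel G.Adj]
    {B : Set (Sym2 V)} {w y z : V} (hdeg : G.degree w ≤ 3) (hB : B ⊆ G.edgeSet) (hyz : y ≠ z)
    (hy : (G.deleteEdges B).Adj w y) (hz : (G.deleteEdges B).Adj w z) :
    {e ∈ B | w ∈ e}.Subsingleton := by
  classical
  rw [deleteEdges_adj] at hy hz
  have hsub : {e ∈ B | w ∈ e} ⊆ G.incidenceSet w \ {s(w, y), s(w, z)} := by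
    rintro e ⟨heB, hwe⟩
    refine ⟨⟨hB heB, hwe⟩, ?_⟩
    rintro (rfl | rfl)
    exacts [hy.2 heB, hz.2 heB]
  have hpair : {s(w, y), s(w, z)} ⊆ G.incidenceSet w := by
    rintro e (rfl | rfl)
    exacts [G.mk'_mem_incidenceSet_left_iff.mpr hy.1, G.mk'_mem_incidenceSet_left_iff.mpr hz.1]
  have hcount := Set.encard_sdiff_add_encard_of_subset hpair
  rw [Set.encard_pair (fun h => hyz (Sym2.congr_right.mp h)), ← coe_incidenceFinset,
    Set.encard_coe_eq_coe_finsetCard, card_incidenceFinset_eq_degree, coe_incidenceFinset] at hcount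
  have hle : (G.incidenceSet w \ {s(w, y), s(w, z)}).encard + 2 ≤ 1 + 2 := by
    rw [hcount]
    exact_mod_cast hdeg
  exact Set.encard_le_one_iff_subsingleton.mp
    ((Set.encard_le_encard hsub).trans ((ENat.add_le_add_iff_right (by decide)).mp hle))

lemma IsMatchingSet.insert (hM : IsMatchingSet G M) {u v : V} (huv : G.Adj u v)
    (hu : ∀ e ∈ M, u ∉ e) (hv : ∀ e ∈ M, v ∉ e) : IsMatchingSet G (insert s(u, v) M) := by
  refine ⟨Set.insert_subset huv hM.1, ?_⟩
  rintro e (rfl | he) f (rfl | hf) hef x hxe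
  · exact absurd rfl hef
  · rcases Sym2.mem_iff.mp hxe with rfl | rfl
    exacts [hu f hf, hv f hf]
  · intro hxf
    rcases Sym2.mem_iff.mp hxf with rfl | rfl
    exacts [hu e he hxe, hv e he hxe]
  · exact hM.2 e he f hf hef x hxe

lemma notMem_of_subsingleton_incident {v : V} {f : Sym2 V} (hd : Disjoint M1 M2)
    (hs : {e ∈ M1 ∪ M2 | v ∈ e}.Subsingleton) (hf : f ∈ M2) (hvf : v ∈ f) :
    ∀ e ∈ M1, v ∉ e := fun _ he hve =>
  Set.disjoint_left.mp hd he (hs ⟨Or.inl he, hve⟩ ⟨Or.inr hf, hvf⟩ ▸ hf)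

def swapOn (M1 M2 K : Set (Sym2 V)) : Set (Sym2 V) := (M1 \ K) ∪ (M2 ∩ K)

lemma IsMatchingSet.swapOn (h1 : IsMatchingSet G M1) (h2 : IsMatchingSet G M2)
    (hK : ∀ ⦃e f x⦄, e ∈ K → f ∈ M1 ∪ M2 → x ∈ e → x ∈ f → f ∈ K) :
    IsMatchingSet G (swapOn M1 M2 K) := by
  refine ⟨Set.union_subset (Set.sdiff_subset.trans h1.1) (Set.inter_subset_left.trans h2.1), ?_⟩
  rintro e (⟨he, heK⟩ | ⟨he, heK⟩) f (⟨hf, hfK⟩ | ⟨hf, hfK⟩) hef x hxe hxf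
  · exact h1.2 e he f hf hef x hxe hxf
  · exact heK (hK hfK (Or.inl he) hxf hxe)
  · exact hfK (hK heK (Or.inl hf) hxe hxf)
  · exact h2.2 e he f hf hef x hxe hxf

lemma Disjoint.swapOn (hd : Disjoint M1 M2) : Disjoint (swapOn M1 M2 K) (swapOn M2 M1 K) := by
  rw [Set.disjoint_left]
  rintro e (⟨he, heK⟩ | ⟨he, heK⟩) (⟨hf, hfK⟩ | ⟨hf, hfK⟩)
  exacts [Set.disjoint_left.mp hd he hf, heK hfK, hfK heK, Set.disjoint_left.mp hd hf he]

lemma swapOn_union_swapOn : swapOn M1 M2 K ∪ swapOn M2 M1 K = M1 ∪ M2 := by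
  ext e
  by_cases h : e ∈ K <;> simp [swapOn, h, or_comm]

def componentEdges (B : Set (Sym2 V)) (u : V) : Set (Sym2 V) :=
  {e ∈ B | ∃ x ∈ e, (fromEdgeSet B).Reachable u x}

lemma reachable_of_mem_componentEdges {B : Set (Sym2 V)} {u x : V} {e : Sym2 V}
    (he : e ∈ componentEdges B u) (hx : x ∈ e) : (fromEdgeSet B).Reachable u x := by
  obtain ⟨heB, y, hye, hy⟩ := he
  by_cases hyx : y = x
  · exact hyx ▸ hy
  · refine hy.trans (Adj.reachable ((fromEdgeSet_adj _).mpr ⟨?_, hyx⟩))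
    rwa [← (Sym2.mem_and_mem_iff hyx).mp ⟨hye, hx⟩]

lemma MaxDisjointPair.symm (hmax : MaxDisjointPair G M1 M2) : MaxDisjointPair G M2 M1 :=
  ⟨hmax.2.1, hmax.1, hmax.2.2.1.symm, fun N1 N2 h1 h2 hd =>
    Set.union_comm M1 M2 ▸ hmax.2.2.2 N1 N2 h1 h2 hd⟩

lemma MaxDisjointPair.exists_mem_of_adj [Finite V] (hmax : MaxDisjointPair G M1 M2) {u v : V}
    (huv : G.Adj u v) (hfree : s(u, v) ∉ M1 ∪ M2) : (∃ e ∈ M1, u ∈ e) ∨ ∃ e ∈ M1, v ∈ e := by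
  by_contra! h
  have hd : Disjoint (insert s(u, v) M1) M2 :=
    Set.disjoint_insert_left.mpr ⟨fun h => hfree (Or.inr h), hmax.2.2.1⟩
  have hle := hmax.2.2.2 _ M2 (hmax.1.insert huv h.1 h.2) hmax.2.1 hd
  rw [Set.insert_union, Set.ncard_insert_of_notMem hfree] at hle
  omega

/-- Exchanging `M1` and `M2` on the component of `u` frees `u` in `M1`; if `v` were outside that
component, `uv` could then be added to `M1`. -/
lemma MaxDisjointPair.reachable_of_adj [Finite V] (hmax : MaxDisjointPair G M1 M2) {u v : V}
    (huv : G.Adj u v) (hfree : s(u, v) ∉ M1 ∪ M2) (hu : ∀ e ∈ M2, u ∉ e)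
    (hv : ∀ e ∈ M1, v ∉ e) : (fromEdgeSet (M1 ∪ M2)).Reachable u v := by
  by_contra hR
  set K := componentEdges (M1 ∪ M2) u
  have hK : ∀ ⦃e f x⦄, e ∈ K → f ∈ M1 ∪ M2 → x ∈ e → x ∈ f → f ∈ K :=
    fun _ _ x he hf hxe hxf => ⟨hf, x, hxf, reachable_of_mem_componentEdges he hxe⟩
  have hN1 : IsMatchingSet G (insert s(u, v) (swapOn M1 M2 K)) := by
    refine (hmax.1.swapOn hmax.2.1 hK).insert huv ?_ ?_
    · rintro e (⟨he, heK⟩ | ⟨he, -⟩) hue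
      exacts [heK ⟨Or.inl he, u, hue, Reachable.rfl⟩, hu e he hue]
    · rintro e (⟨he, -⟩ | ⟨-, heK⟩) hve
      exacts [hv e he hve, hR (reachable_of_mem_componentEdges heK hve)]
  have hN2 : IsMatchingSet G (swapOn M2 M1 K) :=
    hmax.2.1.swapOn hmax.1 (Set.union_comm M1 M2 ▸ hK)
  have hd : Disjoint (insert s(u, v) (swapOn M1 M2 K)) (swapOn M2 M1 K) :=
    Set.disjoint_insert_left.mpr
      ⟨fun h => hfree (swapOn_union_swapOn (K := K) ▸ Or.inr h), hmax.2.2.1.swapOn⟩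
  have hle := hmax.2.2.2 _ _ hN1 hN2 hd
  rw [Set.insert_union, swapOn_union_swapOn, Set.ncard_insert_of_notMem hfree] at hle
  omega

lemma MaxDisjointPair.reachable_of_adj_of_subsingleton [Finite V]
    (hmax : MaxDisjointPair G M1 M2) {u v : V} (huv : G.Adj u v) (hfree : s(u, v) ∉ M1 ∪ M2)
    (hu : ∀ e ∈ M2, u ∉ e) (hv : {e ∈ M1 ∪ M2 | v ∈ e}.Subsingleton) :
    (fromEdgeSet (M1 ∪ M2)).Reachable u v := by
  obtain ⟨f, hf, hvf⟩ : ∃ f ∈ M2, v ∈ f := by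
    rcases hmax.symm.exists_mem_of_adj huv (Set.union_comm M1 M2 ▸ hfree) with ⟨e, he, hue⟩ | h
    exacts [absurd hue (hu e he), h]
  exact hmax.reachable_of_adj huv hfree hu
    (notMem_of_subsingleton_incident hmax.2.2.1 hv hf hvf)

lemma MaxDisjointPair.false_of_deleteEdges_adj [Finite V] (hmax : MaxDisjointPair G M1 M2)
    {v1 v2 v3 : V} (h13 : v1 ≠ v3) (h1 : (G.deleteEdges (M1 ∪ M2)).Adj v2 v1)
    (h3 : (G.deleteEdges (M1 ∪ M2)).Adj v2 v3) (hs1 : {e ∈ M1 ∪ M2 | v1 ∈ e}.Subsingleton)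
    (hs2 : {e ∈ M1 ∪ M2 | v2 ∈ e}.Subsingleton) (hs3 : {e ∈ M1 ∪ M2 | v3 ∈ e}.Subsingleton) :
    False := by
  wlog hv2 : ∀ e ∈ M2, v2 ∉ e generalizing M1 M2
  · obtain ⟨f, hf, hvf⟩ : ∃ f ∈ M2, v2 ∈ f := by simpa using hv2
    have hv2' := notMem_of_subsingleton_incident hmax.2.2.1 hs2 hf hvf
    rw [Set.union_comm] at h1 h3 hs1 hs2 hs3
    exact this hmax.symm h1 h3 hs1 hs2 hs3 hv2'
  rw [deleteEdges_adj] at h1 h3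
  have hr1 := hmax.reachable_of_adj_of_subsingleton h1.1 h1.2 hv2 hs1
  have hr3 := hmax.reachable_of_adj_of_subsingleton h3.1 h3.2 hv2 hs3
  exact hr1.not_reachable_of_subsingleton_neighborSet
    (hmax.1.encard_neighborSet_fromEdgeSet_union_le hmax.2.1) h1.1.ne h3.1.ne h13
    (subsingleton_neighborSet_fromEdgeSet hs2) (subsingleton_neighborSet_fromEdgeSet hs1)
    (subsingleton_neighborSet_fromEdgeSet hs3) hr3

end Matchings

theorem stmt4 {V : Type*} [Fintype V] (G : SimpleGraph V) [DecidableRel G.Adj]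
    (hcubic : ∀ v : V, G.degree v = 3) (M1 M2 : Set (Sym2 V))
    (hmax : MaxDisjointPair G M1 M2) :
    (G.deleteEdges (M1 ∪ M2)).IsAcyclic := by
  intro v c hc
  have hsub : ∀ w ∈ c.support, {e ∈ M1 ∪ M2 | w ∈ e}.Subsingleton := fun w hw => by
    obtain ⟨y, z, hyz, hy, hz⟩ := hc.exists_adj_ne hw
    exact subsingleton_incident_of_deleteEdges_adj (hcubic w).le
      (Set.union_subset hmax.1.1 hmax.2.1.1) hyz hy.adj_sub hz.adj_sub
  have hmem : ∀ {y}, c.toSubgraph.Adj v y → y ∈ c.support :=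
    fun h => c.mem_verts_toSubgraph.mp h.snd_mem
  obtain ⟨v1, v3, h13, h1, h3⟩ := hc.exists_adj_ne c.start_mem_support
  exact hmax.false_of_deleteEdges_adj h13 h1.adj_sub h3.adj_sub (hsub _ (hmem h1))
    (hsub _ c.start_mem_support) (hsub _ (hmem h3))
end

section
/- Let G be a cubic graph and M1, M2 disjoint matchings with |M1 ∪ M2| maximum. Suppose u1u2u3u4 is a path component (P4) of Ĝ := G − M1 − M2, and let v2, v3 be the neighbors of u2, u3 respectively outside the path. Then {u2v2, u3v3} meets both M1 and M2 (one edge is in M1 and the other is in M2). -/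
open SimpleGraph

/-- The vertices `u1 u2 u3 u4` form a path (`P4`) connected component of
`Ĝ = G − M1 − M2`. -/
def IsP4Component {V : Type*} (G : SimpleGraph V) (M1 M2 : Set (Sym2 V))
    (u1 u2 u3 u4 : V) : Prop :=
  u1 ≠ u2 ∧ u1 ≠ u3 ∧ u1 ≠ u4 ∧ u2 ≠ u3 ∧ u2 ≠ u4 ∧ u3 ≠ u4 ∧
  hatAdj G M1 M2 u1 u2 ∧ hatAdj G M1 M2 u2 u3 ∧ hatAdj G M1 M2 u3 u4 ∧
  (∀ w, hatAdj G M1 M2 u1 w → w = u2) ∧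
  (∀ w, hatAdj G M1 M2 u2 w → w = u1 ∨ w = u3) ∧
  (∀ w, hatAdj G M1 M2 u3 w → w = u2 ∨ w = u4) ∧
  (∀ w, hatAdj G M1 M2 u4 w → w = u3)

lemma key_lemma {V : Type*} [Fintype V] (G : SimpleGraph V)
    (Ma Mb : Set (Sym2 V)) (hMa : IsMatchingSet G Ma) (hMb : IsMatchingSet G Mb)
    (hd : Disjoint Ma Mb)
    (hmaxi : ∀ N1 N2 : Set (Sym2 V), IsMatchingSet G N1 → IsMatchingSet G N2 →
      Disjoint N1 N2 → (N1 ∪ N2).ncard ≤ (Ma ∪ Mb).ncard)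
    (u1 u2 u3 u4 v2 v3 : V)
    (adj23 : G.Adj u2 u3)
    (hedge2 : ∀ f ∈ G.edgeSet, u2 ∈ f → f = s(u2,u1) ∨ f = s(u2,u3) ∨ f = s(u2,v2))
    (hedge3 : ∀ f ∈ G.edgeSet, u3 ∈ f → f = s(u3,u2) ∨ f = s(u3,u4) ∨ f = s(u3,v3))
    (h12m : s(u2,u1) ∉ Ma ∪ Mb) (h23m : s(u2,u3) ∉ Ma ∪ Mb) (h34m : s(u3,u4) ∉ Ma ∪ Mb)
    (e2 : s(u2,v2) ∈ Ma) (e3 : s(u3,v3) ∈ Ma) : False := by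
  have hnot : ∀ f ∈ Mb, u2 ∉ f ∧ u3 ∉ f := by
    intro f hf
    constructor
    · intro hm
      rcases hedge2 f (hMb.1 hf) hm with rfl | rfl | rfl
      · exact h12m (Set.mem_union_right _ hf)
      · exact h23m (Set.mem_union_right _ hf)
      · exact (Set.disjoint_left.mp hd e2) hf
    · intro hm
      rcases hedge3 f (hMb.1 hf) hm with rfl | rfl | rfl
      · exact h23m (Set.mem_union_right _ (by rw [Sym2.eq_swap] at hf; exact hf))
      · exact h34m (Set.mem_union_right _ hf)
      · exact (Set.disjoint_left.mp hd e3) hf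
  have hN2 : IsMatchingSet G (insert s(u2,u3) Mb) := by
    constructor
    · exact Set.insert_subset (G.mem_edgeSet.mpr adj23) hMb.1
    · intro e he f hf hne v hv hvf
      rcases Set.mem_insert_iff.mp he with rfl | he
      · rcases Set.mem_insert_iff.mp hf with rfl | hf
        · exact hne rfl
        · rcases Sym2.mem_iff.mp hv with h | h
          · exact (hnot f hf).1 (h ▸ hvf)
          · exact (hnot f hf).2 (h ▸ hvf)
      · rcases Set.mem_insert_iff.mp hf with rfl | hf
        · rcases Sym2.mem_iff.mp hvf with h | h
          · exact (hnot e he).1 (h ▸ hv)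
          · exact (hnot e he).2 (h ▸ hv)
        · exact hMb.2 e he f hf hne v hv hvf
  have hdisj2 : Disjoint Ma (insert s(u2,u3) Mb) := by
    rw [Set.disjoint_left]
    intro a ha hb
    rcases Set.mem_insert_iff.mp hb with rfl | hb
    · exact h23m (Set.mem_union_left _ ha)
    · exact (Set.disjoint_left.mp hd ha) hb
  have hle := hmaxi Ma (insert s(u2,u3) Mb) hMa hN2 hdisj2
  rw [Set.union_insert, Set.ncard_insert_of_notMem h23m] at hle
  omega

theorem stmt8 {V : Type*} [Fintype V] (G : SimpleGraph V) [DecidableRel G.Adj]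
    (hcubic : ∀ v : V, G.degree v = 3) (M1 M2 : Set (Sym2 V))
    (hmax : MaxDisjointPair G M1 M2)
    (u1 u2 u3 u4 : V) (hP : IsP4Component G M1 M2 u1 u2 u3 u4)
    (v2 v3 : V) (hv2 : G.Adj u2 v2) (hv2' : v2 ≠ u1) (hv2'' : v2 ≠ u3)
    (hv3 : G.Adj u3 v3) (hv3' : v3 ≠ u2) (hv3'' : v3 ≠ u4) :
    (s(u2, v2) ∈ M1 ∧ s(u3, v3) ∈ M2) ∨ (s(u2, v2) ∈ M2 ∧ s(u3, v3) ∈ M1) := by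
  classical
  obtain ⟨hM1, hM2, hdisj, hmaxi⟩ := hmax
  obtain ⟨h12, h13, h14, h23, h24, h34, a12, a23, a34, c1, c2, c3, c4⟩ := hP
  -- classification of neighbors of u2
  have heq2 : G.neighborFinset u2 = {u1, u3, v2} := by
    have hsub : ({u1, u3, v2} : Finset V) ⊆ G.neighborFinset u2 := by
      intro x hx
      rw [SimpleGraph.mem_neighborFinset]
      rcases Finset.mem_insert.mp hx with rfl | hx
      · exact a12.1.symm
      rcases Finset.mem_insert.mp hx with rfl | hx
      · exact a23.1
      · rw [Finset.mem_singleton] at hx; subst hx; exact hv2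
    have hcard : ({u1, u3, v2} : Finset V).card = 3 :=
      Finset.card_eq_three.mpr ⟨u1, u3, v2, h13, Ne.symm hv2', Ne.symm hv2'', rfl⟩
    exact (Finset.eq_of_subset_of_card_le hsub
      (by rw [SimpleGraph.card_neighborFinset_eq_degree, hcubic, hcard])).symm
  have heq3 : G.neighborFinset u3 = {u2, u4, v3} := by
    have hsub : ({u2, u4, v3} : Finset V) ⊆ G.neighborFinset u3 := by
      intro x hx
      rw [SimpleGraph.mem_neighborFinset]
      rcases Finset.mem_insert.mp hx with rfl | hx
      · exact a23.1.symm
      rcases Finset.mem_insert.mp hx with rfl | hx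
      · exact a34.1
      · rw [Finset.mem_singleton] at hx; subst hx; exact hv3
    have hcard : ({u2, u4, v3} : Finset V).card = 3 :=
      Finset.card_eq_three.mpr ⟨u2, u4, v3, h24, Ne.symm hv3', Ne.symm hv3'', rfl⟩
    exact (Finset.eq_of_subset_of_card_le hsub
      (by rw [SimpleGraph.card_neighborFinset_eq_degree, hcubic, hcard])).symm
  have hn2 : ∀ w, G.Adj u2 w → w = u1 ∨ w = u3 ∨ w = v2 := by
    intro w hw
    have : w ∈ ({u1, u3, v2} : Finset V) := by
      rw [← heq2, SimpleGraph.mem_neighborFinset]; exact hw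
    simpa using this
  have hn3 : ∀ w, G.Adj u3 w → w = u2 ∨ w = u4 ∨ w = v3 := by
    intro w hw
    have : w ∈ ({u2, u4, v3} : Finset V) := by
      rw [← heq3, SimpleGraph.mem_neighborFinset]; exact hw
    simpa using this
  have hedge2 : ∀ f ∈ G.edgeSet, u2 ∈ f → f = s(u2,u1) ∨ f = s(u2,u3) ∨ f = s(u2,v2) := by
    intro f hf hm
    obtain ⟨w, rfl⟩ : ∃ w, f = s(u2, w) := ⟨Sym2.Mem.other hm, (Sym2.other_spec hm).symm⟩
    have hadj : G.Adj u2 w := G.mem_edgeSet.mp hf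
    rcases hn2 w hadj with rfl | rfl | rfl <;> tauto
  have hedge3 : ∀ f ∈ G.edgeSet, u3 ∈ f → f = s(u3,u2) ∨ f = s(u3,u4) ∨ f = s(u3,v3) := by
    intro f hf hm
    obtain ⟨w, rfl⟩ : ∃ w, f = s(u3, w) := ⟨Sym2.Mem.other hm, (Sym2.other_spec hm).symm⟩
    have hadj : G.Adj u3 w := G.mem_edgeSet.mp hf
    rcases hn3 w hadj with rfl | rfl | rfl <;> tauto
  have e2 : s(u2, v2) ∈ M1 ∪ M2 := by
    by_contra h
    rcases c2 v2 ⟨hv2, h⟩ with rfl | rfl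
    · exact hv2' rfl
    · exact hv2'' rfl
  have e3 : s(u3, v3) ∈ M1 ∪ M2 := by
    by_contra h
    rcases c3 v3 ⟨hv3, h⟩ with rfl | rfl
    · exact hv3' rfl
    · exact hv3'' rfl
  rcases e2 with e2 | e2 <;> rcases e3 with e3 | e3
  · exact (key_lemma G M1 M2 hM1 hM2 hdisj hmaxi u1 u2 u3 u4 v2 v3 a23.1 hedge2 hedge3
      (by rw [Sym2.eq_swap]; exact a12.2) a23.2 a34.2 e2 e3).elim
  · exact Or.inl ⟨e2, e3⟩
  · exact Or.inr ⟨e2, e3⟩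
  · exact (key_lemma G M2 M1 hM2 hM1 hdisj.symm
      (fun N1 N2 h1 h2 hdd => by rw [Set.union_comm M2 M1]; exact hmaxi N1 N2 h1 h2 hdd)
      u1 u2 u3 u4 v2 v3 a23.1 hedge2 hedge3
      (by rw [Set.union_comm, Sym2.eq_swap]; exact a12.2)
      (by rw [Set.union_comm]; exact a23.2)
      (by rw [Set.union_comm]; exact a34.2) e2 e3).elim
end
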